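/- arXiv:2110.01231 — 5 statements merged into one kernel-verified Lean document; each statement's English description precedes it below -/
import Mathlib

section
/- Let K ≥ 1, let p : Fin K → ℝ^K be an affinely independent family of points, and let d : Fin K → ℝ. Then the trilateration solution set S = {y ∈ ℝ^K : ∀ i, dist(y, p i) = d i} contains at most two points; i.e., there exist points a, b ∈ ℝ^K such that S ⊆ {a, b}. -/
open EuclideanGeometry AffineSubspace Module

/-!
Fix one solution `a`. Any other solution `y` has the same distance as `a` to each `p i`, so the
hyperplane `s` spanned by the `p i` lies in the perpendicular bisector of `a` and `y`. Hence
`y - a` is normal to `s`, and `y`, `a` lie on the same normal line to `s`, at the same distance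
from its foot; the normal line being one-dimensional, `y` is `a` or its mirror image in `s`.
-/

theorem eq_or_eq_neg_of_norm_eq_of_finrank_eq_one {E : Type*} [NormedAddCommGroup E]
    [NormedSpace ℝ E] (hE : finrank ℝ E = 1) {x y : E} (hxy : ‖x‖ = ‖y‖) :
    x = y ∨ x = -y := by
  rcases eq_or_ne y 0 with rfl | hy
  · exact .inl (norm_eq_zero.mp (by simpa using hxy))
  obtain ⟨c, rfl⟩ := exists_smul_eq_of_finrank_eq_one hE hy x
  have hc : |c| = 1 := by
    rw [norm_smul, Real.norm_eq_abs] at hxy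
    exact (mul_eq_right₀ (norm_ne_zero_iff.mpr hy)).mp hxy
  rcases abs_eq zero_le_one |>.mp hc with rfl | rfl
  · exact .inl (one_smul ℝ y)
  · exact .inr (neg_one_smul ℝ y)

theorem AffineIndependent.finrank_orthogonal_vectorSpan {ι V P : Type*} [Fintype ι] [Nonempty ι]
    [NormedAddCommGroup V] [InnerProductSpace ℝ V] [FiniteDimensional ℝ V] [AddTorsor V P]
    {p : ι → P} (hp : AffineIndependent ℝ p) (hV : finrank ℝ V = Fintype.card ι) :
    finrank ℝ (vectorSpan ℝ (Set.range p))ᗮ = 1 :=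
  Submodule.finrank_add_finrank_orthogonal' (by rw [hp.finrank_vectorSpan_add_one, hV])

section PerpBisector

variable {V P : Type*} [NormedAddCommGroup V] [InnerProductSpace ℝ V] [MetricSpace P]
  [NormedAddTorsor V P]

theorem affineSpan_le_perpBisector {ι : Type*} {p : ι → P} {a y : P}
    (h : ∀ i, dist a (p i) = dist y (p i)) : affineSpan ℝ (Set.range p) ≤ perpBisector a y :=
  affineSpan_le.mpr <| Set.range_subset_iff.mpr fun i ↦ mem_perpBisector_iff_dist_eq'.mpr (h i)

theorem vsub_mem_direction_orthogonal_of_le_perpBisector {s : AffineSubspace ℝ P} {a y : P}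
    (h : s ≤ perpBisector a y) : y -ᵥ a ∈ s.directionᗮ := by
  have hdir : s.direction ≤ (ℝ ∙ (y -ᵥ a))ᗮ := direction_perpBisector a y ▸ direction_le h
  exact Submodule.orthogonal_le hdir
    (Submodule.le_orthogonal_orthogonal _ (Submodule.mem_span_singleton_self _))

theorem eq_or_eq_reflection_of_le_perpBisector {s : AffineSubspace ℝ P} [Nonempty s]
    [s.direction.HasOrthogonalProjection] (hs : finrank ℝ s.directionᗮ = 1) {a y : P}
    (h : s ≤ perpBisector a y) : y = a ∨ y = reflection s a := by
  set m : P := (orthogonalProjection s a : P)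
  have hm : m ∈ s := orthogonalProjection_mem a
  have ha : a -ᵥ m ∈ s.directionᗮ := vsub_orthogonalProjection_mem_direction_orthogonal s a
  have hy : y -ᵥ m ∈ s.directionᗮ := by
    rw [← vsub_add_vsub_cancel y a m]
    exact add_mem (vsub_mem_direction_orthogonal_of_le_perpBisector h) ha
  have hnorm : ‖(⟨y -ᵥ m, hy⟩ : s.directionᗮ)‖ = ‖(⟨a -ᵥ m, ha⟩ : s.directionᗮ)‖ := by
    simpa only [Submodule.coe_norm, dist_eq_norm_vsub', eq_comm] using
      mem_perpBisector_iff_dist_eq.mp (h hm)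
  rcases eq_or_eq_neg_of_norm_eq_of_finrank_eq_one hs hnorm with heq | heq
  · exact .inl (vsub_left_cancel (congrArg Subtype.val heq))
  · right
    rw [← vsub_vadd a m, reflection_orthogonal_vadd hm ha, ← vsub_vadd y m]
    exact congrArg (· +ᵥ m) (congrArg Subtype.val heq)

end PerpBisector

/-- Trilateration in ℝ^K from K affinely independent points determines at most
two candidate positions: the solution set is contained in a two-point set. -/
theorem trilateration_at_most_two (K : ℕ) (hK : 1 ≤ K)
    (p : Fin K → EuclideanSpace ℝ (Fin K)) (hp : AffineIndependent ℝ p)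
    (d : Fin K → ℝ) :
    ∃ a b : EuclideanSpace ℝ (Fin K),
      {y : EuclideanSpace ℝ (Fin K) | ∀ i, dist y (p i) = d i} ⊆ {a, b} := by
  rcases Set.eq_empty_or_nonempty {y : EuclideanSpace ℝ (Fin K) | ∀ i, dist y (p i) = d i}
    with hS | ⟨a, ha⟩
  · exact ⟨0, 0, hS ▸ Set.empty_subset _⟩
  have : Nonempty (Fin K) := ⟨⟨0, hK⟩⟩
  let s := affineSpan ℝ (Set.range p)
  have hs : finrank ℝ s.directionᗮ = 1 := by
    rw [direction_affineSpan]
    exact hp.finrank_orthogonal_vectorSpan (by simp)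
  refine ⟨a, reflection s a, fun y hy ↦ ?_⟩
  exact eq_or_eq_reflection_of_le_perpBisector hs
    (affineSpan_le_perpBisector fun i ↦ (ha i).trans (hy i).symm)
end

section
/- (Corollary 3.5: combinatorial DDGP instances with discretization edges only have exactly 2^(n−K) realizations extending a fixed initial clique.) Fix integers K ≥ 1 and n > K. Let E be a set of unordered pairs of elements of Fin n (the edge set), let d : Fin n → Fin n → ℝ be symmetric edge weights, and for each j with K ≤ j < n let U j be a K-element subset of {0,…,j−1}. Assume: (i) all pairs of distinct vertices i, i' < K belong to E; (ii) for each j ≥ K and each i ∈ U j, {i,j} ∈ E; (iii) for each j ≥ K, all pairs of distinct elements of U j belong to E (each U j induces a clique); (iv) every edge {i,j} ∈ E with i < j and j ≥ K satisfies i ∈ U j (no pruning edges). Call x : Fin n → ℝ^K a realization if dist(x i, x j) = d i j for every {i,j} ∈ E. Suppose there exists a realization x₀ such that for every j with K ≤ j < n, the K+1 points {x₀ i : i ∈ U j} ∪ {x₀ j} form an affinely independent family. Then the set of realizations x satisfying x i = x₀ i for all i < K has exactly 2^(n−K) elements. -/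
/-!
Place the vertices one at a time. When vertex `j` is reached, its `K` discretization neighbours
`U j` form a clique, so their current positions are congruent to their positions under `x₀`;
being affinely independent they span a hyperplane of `ℝ^K`, and the congruence extends to an
isometry of `ℝ^K`. The admissible positions for `j` are thus the isometric image of the points
having the same distances to `x₀ (U j)` as `x₀ j`, namely `x₀ j` and its mirror image in that
hyperplane: two distinct points, as `x₀ j` is off the hyperplane. With no pruning edges every such
choice extends, so each of the `n - K` placements doubles the count.
-/

open Module EuclideanGeometry AffineSubspace RealInnerProductSpace

theorem ENat.card_sigma_of_forall_card_eq {α : Type*} {β : α → Type*} {k : ℕ}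
    (h : ∀ a, ENat.card (β a) = k) : ENat.card (Σ a, β a) = ENat.card α * k := by
  have e : ∀ a, β a ≃ Fin k := fun a =>
    have : Finite (β a) := ENat.card_lt_top.mp (h a ▸ ENat.natCast_lt_top k)
    Finite.equivFinOfCardEq (by exact_mod_cast (ENat.card_eq_coe_natCard (β a)).symm.trans (h a))
  rw [ENat.card_congr ((Equiv.sigmaCongrRight e).trans (Equiv.sigmaEquivProd α (Fin k))),
    ENat.card_prod, ENat.card_eq_coe_fintype_card (α := Fin k), Fintype.card_fin]

section EuclideanGeometry

variable {V P : Type*} [NormedAddCommGroup V] [InnerProductSpace ℝ V] [MetricSpace P]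
  [NormedAddTorsor V P]

theorem inner_vsub_vsub_eq_dist_sq (p q o : P) :
    ⟪p -ᵥ o, q -ᵥ o⟫ = (dist p o ^ 2 + dist q o ^ 2 - dist p q ^ 2) / 2 := by
  rw [dist_eq_norm_vsub V p o, dist_eq_norm_vsub V q o, dist_eq_norm_vsub V p q,
    ← vsub_sub_vsub_cancel_right p q o, norm_sub_sq_real]
  ring

variable [FiniteDimensional ℝ V]

theorem LinearIndependent.exists_linearIsometryEquiv_of_inner_eq {ι : Type*} {v w : ι → V}
    (hv : LinearIndependent ℝ v) (h : ∀ i j, ⟪w i, w j⟫ = ⟪v i, v j⟫) :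
    ∃ L : V ≃ₗᵢ[ℝ] V, ∀ i, L (v i) = w i := by
  set b := Basis.span hv
  set T := b.constr ℝ w
  have hT : ∀ x y, ⟪T x, T y⟫ = ⟪(x : V), y⟫ := by
    have : (innerₗ V).compl₁₂ T T =
        (innerₗ V).compl₁₂ (Submodule.subtype _) (Submodule.subtype _) :=
      LinearMap.ext_basis b b fun i j => by
        simp only [LinearMap.compl₁₂_apply, innerₗ_apply_apply, Submodule.subtype_apply, T,
          Basis.constr_basis]
        simpa only [b, Basis.span_apply] using h i j
    exact fun x y => LinearMap.congr_fun₂ this x y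
  refine ⟨(T.isometryOfInner hT).extend.toLinearIsometryEquiv rfl, fun i => ?_⟩
  calc (T.isometryOfInner hT).extend (v i) = (T.isometryOfInner hT).extend (b i) := by
        rw [Basis.span_apply]
    _ = T (b i) := LinearIsometry.extend_apply _ _
    _ = w i := b.constr_basis ℝ w i

theorem AffineIndependent.exists_affineIsometryEquiv_of_dist_eq {ι : Type*} {a b : ι → P}
    (ha : AffineIndependent ℝ a) (h : ∀ i j, dist (b i) (b j) = dist (a i) (a j)) :
    ∃ f : P ≃ᵃⁱ[ℝ] P, ∀ i, f (a i) = b i := by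
  rcases isEmpty_or_nonempty ι with _ | ⟨⟨i₀⟩⟩
  · exact ⟨AffineIsometryEquiv.refl ℝ P, isEmptyElim⟩
  obtain ⟨L, hL⟩ := ((affineIndependent_iff_linearIndependent_vsub ℝ a i₀).mp ha
    ).exists_linearIsometryEquiv_of_inner_eq (w := fun i : {x // x ≠ i₀} => b i -ᵥ b i₀)
      fun i j => by simp only [inner_vsub_vsub_eq_dist_sq, h]
  refine ⟨(AffineIsometryEquiv.vaddConst ℝ (a i₀)).symm.trans
    (L.toAffineIsometryEquiv.trans (AffineIsometryEquiv.vaddConst ℝ (b i₀))), fun i => ?_⟩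
  by_cases hi : i = i₀
  · subst hi; simp
  · simpa using congrArg (· +ᵥ b i₀) (hL ⟨i, hi⟩)

theorem EuclideanGeometry.eq_reflection_of_le_perpBisector {s : AffineSubspace ℝ P} [Nonempty s]
    {p q : P} (hs : finrank ℝ s.direction + 1 = finrank ℝ V) (hpq : p ≠ q)
    (h : s ≤ perpBisector p q) : p = reflection s q := by
  have hdir : s.direction = (perpBisector p q).direction := by
    refine Submodule.eq_of_le_of_finrank_eq (direction_le h) ?_
    have := (ℝ ∙ (q -ᵥ p)).finrank_add_finrank_orthogonal
    rw [finrank_span_singleton (vsub_ne_zero.mpr hpq.symm)] at this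
    rw [direction_perpBisector]
    omega
  obtain ⟨x, hx⟩ := (inferInstance : Nonempty s)
  have hseq : s = perpBisector p q := ext_of_direction_eq hdir ⟨x, hx, h hx⟩
  have hproj : (orthogonalProjection s q : P) = midpoint ℝ p q := by
    refine coe_orthogonalProjection_eq_iff_mem.mpr ⟨hseq ▸ midpoint_mem_perpBisector p q, ?_⟩
    rw [hdir, direction_perpBisector, Submodule.orthogonal_orthogonal, Submodule.mem_span_singleton]
    exact ⟨2⁻¹, by rw [right_vsub_midpoint, invOf_eq_inv]⟩
  rw [reflection_apply', hproj, ← Equiv.pointReflection_apply, Equiv.pointReflection_midpoint_right]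

theorem AffineIndependent.encard_setOf_forall_dist_eq {ι : Type*} [Fintype ι] [Nonempty ι]
    {a : ι → P} (ha : AffineIndependent ℝ a) (hcard : Fintype.card ι = finrank ℝ V) {q : P}
    (hq : q ∉ affineSpan ℝ (Set.range a)) :
    {p | ∀ i, dist p (a i) = dist q (a i)}.encard = 2 := by
  set s := affineSpan ℝ (Set.range a)
  obtain ⟨i₀⟩ := ‹Nonempty ι›
  have : Nonempty s := ⟨⟨a i₀, mem_affineSpan ℝ (Set.mem_range_self i₀)⟩⟩
  have hs : finrank ℝ s.direction + 1 = finrank ℝ V := by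
    have := Fintype.card_pos (α := ι)
    rw [direction_affineSpan, ha.finrank_vectorSpan (n := Fintype.card ι - 1) (by omega)]
    omega
  have hpair : {p | ∀ i, dist p (a i) = dist q (a i)} = {q, reflection s q} := by
    ext p
    simp only [Set.mem_ofPred_eq, Set.mem_insert_iff, Set.mem_singleton_iff]
    refine ⟨fun hp => or_iff_not_imp_left.mpr fun hpq => ?_, ?_⟩
    · refine eq_reflection_of_le_perpBisector hs hpq (affineSpan_le.mpr ?_)
      rintro _ ⟨i, rfl⟩
      rw [SetLike.mem_coe, mem_perpBisector_iff_dist_eq, dist_comm, hp, dist_comm]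
    · rintro (rfl | rfl) i
      · rfl
      · rw [dist_comm, dist_reflection_eq_of_mem s (mem_affineSpan ℝ (Set.mem_range_self i)),
          dist_comm]
  rw [hpair, Set.encard_pair]
  exact fun h => hq (reflection_eq_self_iff q |>.mp h.symm)

theorem AffineIndependent.encard_setOf_forall_mem_dist_eq {ι : Type*} [DecidableEq ι]
    {s : Finset ι} {j : ι} (hj : j ∉ s) (hs₀ : s.Nonempty) (hs : s.card = finrank ℝ V) {x y : ι → P}
    (hx : AffineIndependent ℝ fun i : ↥(insert j s) => x i)
    (hy : ∀ i ∈ s, ∀ i' ∈ s, dist (y i) (y i') = dist (x i) (x i')) :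
    {p | ∀ i ∈ s, dist p (y i) = dist (x j) (x i)}.encard = 2 := by
  have : Nonempty s := hs₀.to_subtype
  set a : s → P := fun i => x i
  let e : s ↪ ↥(insert j s) :=
    ⟨fun i => ⟨i.1, Finset.mem_insert_of_mem i.2⟩, fun i i' h => Subtype.ext (Subtype.mk.inj h)⟩
  have ha : AffineIndependent ℝ a := hx.comp_embedding e
  have hq : x j ∉ affineSpan ℝ (Set.range a) := by
    convert hx.notMem_affineSpan_sdiff ⟨j, Finset.mem_insert_self j s⟩ Set.univ using 3
    ext p
    simp only [Set.mem_range, Subtype.exists, exists_prop, Set.mem_image, Set.mem_sdiff,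
      Set.mem_univ, Set.mem_singleton_iff, true_and, Subtype.mk.injEq, Finset.mem_insert, a]
    exact ⟨fun ⟨i, hi, h⟩ => ⟨i, .inr hi, ne_of_mem_of_not_mem hi hj, h⟩,
      fun ⟨i, hi, hij, h⟩ => ⟨i, hi.resolve_left hij, h⟩⟩
  obtain ⟨f, hf⟩ := ha.exists_affineIsometryEquiv_of_dist_eq (b := fun i : s => y i)
    fun i i' => hy _ i.2 _ i'.2
  have himage : {p | ∀ i ∈ s, dist p (y i) = dist (x j) (x i)} =
      f '' {p | ∀ i, dist p (a i) = dist (x j) (a i)} := by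
    ext p
    obtain ⟨p, rfl⟩ := f.surjective p
    rw [f.injective.mem_set_image]
    simp only [Set.mem_ofPred_eq, Subtype.forall]
    exact forall₂_congr fun i hi => by rw [← hf ⟨i, hi⟩, f.dist_map]
  rw [himage, f.injective.encard_image, ha.encard_setOf_forall_dist_eq (by simp [hs]) hq]

end EuclideanGeometry

namespace DDGP

variable {P : Type*} [MetricSpace P] {n : ℕ}

/-- Vertices `i` with `K ≤ i < m` are placed freely; all others are pinned to `x₀`, so that partial
realizations have the same type as full ones. -/
def partialRealizations (E : Set (Sym2 (Fin n))) (d : Fin n → Fin n → ℝ) (x₀ : Fin n → P)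
    (K m : ℕ) : Set (Fin n → P) :=
  {x | (∀ i j, s(i, j) ∈ E → (i : ℕ) < m → (j : ℕ) < m → dist (x i) (x j) = d i j) ∧
    ∀ i : Fin n, ((i : ℕ) < K ∨ m ≤ i) → x i = x₀ i}

variable {E : Set (Sym2 (Fin n))} {d : Fin n → Fin n → ℝ} {x₀ : Fin n → P}

theorem partialRealizations_self (K : ℕ)
    (hx₀ : ∀ i j, s(i, j) ∈ E → dist (x₀ i) (x₀ j) = d i j) :
    partialRealizations E d x₀ K K = {x₀} := by
  ext x
  refine ⟨fun hx => funext fun i => hx.2 i (lt_or_ge _ _), ?_⟩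
  rintro rfl
  exact ⟨fun i j hij _ _ => hx₀ i j hij, fun _ _ => rfl⟩

theorem partialRealizations_top (K : ℕ) :
    partialRealizations E d x₀ K n =
      {x | (∀ e ∈ E, ∀ i j : Fin n, e = s(i, j) → dist (x i) (x j) = d i j) ∧
        ∀ i : Fin n, (i : ℕ) < K → x i = x₀ i} := by
  ext x
  refine and_congr ⟨fun h e he i j hij => h i j (hij ▸ he) i.2 j.2,
    fun h i j hij _ _ => h _ hij i j rfl⟩ (forall_congr' fun i => ?_)
  simp [i.2.not_ge]

def candidatePositions (d : Fin n → Fin n → ℝ) (U : Finset (Fin n)) (j : Fin n)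
    (y : Fin n → P) : Set P :=
  {p | ∀ i ∈ U, dist p (y i) = d i j}

variable {K : ℕ} {j : Fin n} {U : Finset (Fin n)}

open Function

theorem update_self_mem_partialRealizations (hKj : K ≤ j) (hd : ∀ i i', d i i' = d i' i)
    (hx₀ : ∀ i i', s(i, i') ∈ E → dist (x₀ i) (x₀ i') = d i i')
    (hnoprune : ∀ i, s(i, j) ∈ E → (i : ℕ) < j → i ∈ U) {y : Fin n → P}
    (hy : y ∈ partialRealizations E d x₀ K j) {p : P} (hp : p ∈ candidatePositions d U j y) :
    update y j p ∈ partialRealizations E d x₀ K (j + 1) := by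
  have hlt : ∀ i : Fin n, i ≠ j → (i : ℕ) < j + 1 → (i : ℕ) < j := fun i hij hi =>
    lt_of_le_of_ne (Nat.le_of_lt_succ hi) (Fin.val_ne_of_ne hij)
  refine ⟨fun i i' hii' hi hi' => ?_, fun i hi => ?_⟩
  · rcases eq_or_ne j i with rfl | hij <;> rcases eq_or_ne j i' with rfl | hi'j
    · simpa using hx₀ j j hii'
    · rw [update_self, update_of_ne hi'j.symm, hd]
      exact hp i' (hnoprune i' (Sym2.eq_swap ▸ hii') (hlt i' hi'j.symm hi'))
    · rw [update_self, update_of_ne hij.symm, dist_comm]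
      exact hp i (hnoprune i hii' (hlt i hij.symm hi))
    · rw [update_of_ne hij.symm, update_of_ne hi'j.symm]
      exact hy.1 i i' hii' (hlt i hij.symm hi) (hlt i' hi'j.symm hi')
  · have hij : i ≠ j := by rintro rfl; omega
    rw [update_of_ne hij]
    exact hy.2 i (hi.imp_right fun h => by omega)

theorem update_mem_partialRealizations (hUpred : ∀ i ∈ U, (i : ℕ) < j)
    (hUadj : ∀ i ∈ U, s(i, j) ∈ E) {x : Fin n → P}
    (hx : x ∈ partialRealizations E d x₀ K (j + 1)) :
    update x j (x₀ j) ∈ partialRealizations E d x₀ K j ∧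
      x j ∈ candidatePositions d U j (update x j (x₀ j)) := by
  refine ⟨⟨fun i i' hii' hi hi' => ?_, fun i hi => ?_⟩, fun i hiU => ?_⟩
  · rw [update_of_ne (Fin.ne_of_lt hi), update_of_ne (Fin.ne_of_lt hi')]
    exact hx.1 i i' hii' (by omega) (by omega)
  · rcases eq_or_ne i j with rfl | hij
    · exact update_self ..
    · rw [update_of_ne hij]
      have := Fin.val_ne_of_ne hij
      exact hx.2 i (hi.imp_right fun h => by omega)
  · have hij := hUpred i hiU
    rw [update_of_ne (Fin.ne_of_lt hij), dist_comm]
    exact hx.1 i j (hUadj i hiU) (by omega) (by omega)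

def partialRealizationsSuccEquiv (hKj : K ≤ j) (hd : ∀ i i', d i i' = d i' i)
    (hx₀ : ∀ i i', s(i, i') ∈ E → dist (x₀ i) (x₀ i') = d i i')
    (hnoprune : ∀ i, s(i, j) ∈ E → (i : ℕ) < j → i ∈ U) (hUpred : ∀ i ∈ U, (i : ℕ) < j)
    (hUadj : ∀ i ∈ U, s(i, j) ∈ E) :
    partialRealizations E d x₀ K (j + 1) ≃
      Σ y : partialRealizations E d x₀ K j, candidatePositions d U j y.1 where
  toFun x := ⟨⟨_, (update_mem_partialRealizations hUpred hUadj x.2).1⟩,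
    ⟨x.1 j, (update_mem_partialRealizations hUpred hUadj x.2).2⟩⟩
  invFun y :=
    ⟨update y.1 j y.2, update_self_mem_partialRealizations hKj hd hx₀ hnoprune y.1.2 y.2.2⟩
  left_inv x := Subtype.ext (by simp)
  right_inv y := Sigma.subtype_ext (Subtype.ext (by simpa using (y.1.2.2 j (.inr le_rfl)).symm))
    (update_self ..)

theorem encard_partialRealizations_succ (hKj : K ≤ j) (hd : ∀ i i', d i i' = d i' i)
    (hx₀ : ∀ i i', s(i, i') ∈ E → dist (x₀ i) (x₀ i') = d i i')
    (hnoprune : ∀ i, s(i, j) ∈ E → (i : ℕ) < j → i ∈ U) (hUpred : ∀ i ∈ U, (i : ℕ) < j)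
    (hUadj : ∀ i ∈ U, s(i, j) ∈ E)
    (hC : ∀ y ∈ partialRealizations E d x₀ K j, (candidatePositions d U j y).encard = 2) :
    (partialRealizations E d x₀ K (j + 1)).encard =
      (partialRealizations E d x₀ K j).encard * 2 := by
  have hC' : ∀ y : partialRealizations E d x₀ K j,
      ENat.card (candidatePositions d U j y.1) = (2 : ℕ) := fun y => hC y.1 y.2
  rw [← ENat.card_coe_set_eq, ← ENat.card_coe_set_eq,
    ENat.card_congr (partialRealizationsSuccEquiv hKj hd hx₀ hnoprune hUpred hUadj),
    ENat.card_sigma_of_forall_card_eq hC', Nat.cast_ofNat]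

theorem encard_candidatePositions {V : Type*} [NormedAddCommGroup V] [InnerProductSpace ℝ V]
    [FiniteDimensional ℝ V] [NormedAddTorsor V P] (hU₀ : U.Nonempty)
    (hUcard : U.card = finrank ℝ V) (hUpred : ∀ i ∈ U, (i : ℕ) < j)
    (hUadj : ∀ i ∈ U, s(i, j) ∈ E) (hUclique : ∀ i ∈ U, ∀ i' ∈ U, i ≠ i' → s(i, i') ∈ E)
    (hx₀ : ∀ i i', s(i, i') ∈ E → dist (x₀ i) (x₀ i') = d i i')
    (hgen : AffineIndependent ℝ fun i : ↥(insert j U) => x₀ i) {y : Fin n → P}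
    (hy : y ∈ partialRealizations E d x₀ K j) : (candidatePositions d U j y).encard = 2 := by
  have hcand : candidatePositions d U j y = {p | ∀ i ∈ U, dist p (y i) = dist (x₀ j) (x₀ i)} :=
    Set.ext fun p => forall₂_congr fun i hi => by rw [dist_comm (x₀ j), hx₀ i j (hUadj i hi)]
  rw [hcand]
  refine hgen.encard_setOf_forall_mem_dist_eq (fun h => lt_irrefl _ (hUpred j h)) hU₀ hUcard
    fun i hi i' hi' => ?_
  rcases eq_or_ne i i' with rfl | hii'
  · simp
  · have he := hUclique i hi i' hi' hii'
    rw [hy.1 i i' he (hUpred i hi) (hUpred i' hi'), hx₀ i i' he]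

end DDGP

theorem combinatorial_ddgp_count_general (K n : ℕ) (hK : 1 ≤ K) (hn : K < n)
    (E : Set (Sym2 (Fin n)))
    (d : Fin n → Fin n → ℝ) (hd : ∀ i j, d i j = d j i)
    (U : Fin n → Finset (Fin n))
    (hUcard : ∀ j : Fin n, K ≤ (j : ℕ) → (U j).card = K)
    (hUpred : ∀ j : Fin n, K ≤ (j : ℕ) → ∀ i ∈ U j, (i : ℕ) < (j : ℕ))
    -- (ii) each vertex is adjacent to its predecessors in U j:
    (hUadj : ∀ j : Fin n, K ≤ (j : ℕ) → ∀ i ∈ U j, s(i, j) ∈ E)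
    -- (iii) each U j induces a clique:
    (hUclique : ∀ j : Fin n, K ≤ (j : ℕ) → ∀ i ∈ U j, ∀ i' ∈ U j, i ≠ i' → s(i, i') ∈ E)
    -- (iv) no pruning edges:
    (hnoprune : ∀ i j : Fin n, s(i, j) ∈ E → (i : ℕ) < (j : ℕ) → K ≤ (j : ℕ) → i ∈ U j)
    (x₀ : Fin n → EuclideanSpace ℝ (Fin K))
    (hx₀ : ∀ e ∈ E, ∀ i j : Fin n, e = s(i, j) → dist (x₀ i) (x₀ j) = d i j)
    -- general position of the trilateration steps of x₀:
    (hgen : ∀ j : Fin n, K ≤ (j : ℕ) →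
      AffineIndependent ℝ (fun i : ↥(insert j (U j) : Finset (Fin n)) => x₀ i)) :
    {x : Fin n → EuclideanSpace ℝ (Fin K) |
        (∀ e ∈ E, ∀ i j : Fin n, e = s(i, j) → dist (x i) (x j) = d i j) ∧
        ∀ i : Fin n, (i : ℕ) < K → x i = x₀ i}.encard = 2 ^ (n - K) := by
  have hx₀' : ∀ i j, s(i, j) ∈ E → dist (x₀ i) (x₀ j) = d i j := fun i j h => hx₀ _ h i j rfl
  have hcount : ∀ m, K ≤ m → m ≤ n →
      (DDGP.partialRealizations E d x₀ K m).encard = 2 ^ (m - K) := by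
    refine Nat.le_induction (by simp [DDGP.partialRealizations_self K hx₀']) fun m hKm ih hmn => ?_
    have hUK : (U ⟨m, hmn⟩).card = K := hUcard ⟨m, hmn⟩ hKm
    refine (DDGP.encard_partialRealizations_succ (j := ⟨m, hmn⟩) hKm hd hx₀'
      (fun i hi hij => hnoprune i _ hi hij hKm) (hUpred _ hKm) (hUadj _ hKm)
      fun y hy => DDGP.encard_candidatePositions (Finset.card_pos.mp (by omega))
        (by rw [hUK, finrank_euclideanSpace_fin]) (hUpred _ hKm) (hUadj _ hKm) (hUclique _ hKm)
        hx₀' (hgen _ hKm) hy).trans ?_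
    rw [ih (Nat.le_of_succ_le hmn), ← pow_succ, Nat.sub_add_comm hKm]
  rw [← DDGP.partialRealizations_top, hcount n hn.le le_rfl]

/-- A combinatorial DDGP instance (every adjacent-predecessor set U j induces a
clique) with discretization edges only has exactly 2^(n-K) realizations extending
a fixed realization of the initial clique, provided some realization exists whose
trilateration steps are all in general position. -/
theorem combinatorial_ddgp_count (K n : ℕ) (hK : 1 ≤ K) (hn : K < n)
    (E : Set (Sym2 (Fin n)))
    (d : Fin n → Fin n → ℝ) (hd : ∀ i j, d i j = d j i)
    (U : Fin n → Finset (Fin n))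
    (hUcard : ∀ j : Fin n, K ≤ (j : ℕ) → (U j).card = K)
    (hUpred : ∀ j : Fin n, K ≤ (j : ℕ) → ∀ i ∈ U j, (i : ℕ) < (j : ℕ))
    -- (i) the first K vertices form a clique:
    (hclique0 : ∀ i i' : Fin n, (i : ℕ) < K → (i' : ℕ) < K → i ≠ i' → s(i, i') ∈ E)
    -- (ii) each vertex is adjacent to its predecessors in U j:
    (hUadj : ∀ j : Fin n, K ≤ (j : ℕ) → ∀ i ∈ U j, s(i, j) ∈ E)
    -- (iii) each U j induces a clique:
    (hUclique : ∀ j : Fin n, K ≤ (j : ℕ) → ∀ i ∈ U j, ∀ i' ∈ U j, i ≠ i' → s(i, i') ∈ E)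
    -- (iv) no pruning edges:
    (hnoprune : ∀ i j : Fin n, s(i, j) ∈ E → (i : ℕ) < (j : ℕ) → K ≤ (j : ℕ) → i ∈ U j)
    (x₀ : Fin n → EuclideanSpace ℝ (Fin K))
    (hx₀ : ∀ e ∈ E, ∀ i j : Fin n, e = s(i, j) → dist (x₀ i) (x₀ j) = d i j)
    -- general position of the trilateration steps of x₀:
    (hgen : ∀ j : Fin n, K ≤ (j : ℕ) →
      AffineIndependent ℝ (fun i : ↥(insert j (U j) : Finset (Fin n)) => x₀ i)) :
    {x : Fin n → EuclideanSpace ℝ (Fin K) |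
        (∀ e ∈ E, ∀ i j : Fin n, e = s(i, j) → dist (x i) (x j) = d i j) ∧
        ∀ i : Fin n, (i : ℕ) < K → x i = x₀ i}.encard = 2 ^ (n - K) :=
  combinatorial_ddgp_count_general K n hK hn E d hd U hUcard hUpred hUadj hUclique hnoprune x₀ hx₀
    hgen
end

section
/- (Schoenberg criterion, used to characterize valid EDMs.) Let n ≥ 1 and let D : Matrix (Fin n) (Fin n) ℝ be symmetric with zero diagonal. Let J = 1 − (1/n)·𝟙𝟙ᵀ be the centering matrix, where 𝟙 is the all-ones column vector and 1 is the identity matrix. Then there exists a family x : Fin n → ℝ^K with D i j = dist(x i, x j)² for all i, j if and only if the matrix G = −(1/2)·(J * D * J) is positive semidefinite and has rank at most K. -/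
/-!
Write `J` for the centering matrix and `G = -(1/2) J D J`. If `D` is the squared distance matrix of
a family `x` in `ℝ^K`, expanding `‖x i - x j‖² = ‖x i‖² + ‖x j‖² - 2⟪x i, x j⟫` and using `J 𝟙 = 0`
shows that `G` is the Gram matrix of the centred family `J x`, hence positive semidefinite of rank
at most `K`. Conversely, a positive semidefinite `G` of rank at most `K` is the Gram matrix of a
family `w` in `ℝ^K`. Since `J (eᵢ - eⱼ) = eᵢ - eⱼ`, the quadratic form of `G` at `eᵢ - eⱼ`, which is
`‖w i - w j‖²`, is `-(1/2)` times that of `D`, and this is `D i j` when `D` is symmetric and hollow.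
-/

open Module Submodule
open scoped ComplexOrder

section
variable {𝕜 E F : Type*} [RCLike 𝕜] [NormedAddCommGroup E] [InnerProductSpace 𝕜 E]
  [NormedAddCommGroup F] [InnerProductSpace 𝕜 F]

theorem nonempty_linearIsometry_of_finrank_le [FiniteDimensional 𝕜 E] [FiniteDimensional 𝕜 F]
    (h : finrank 𝕜 E ≤ finrank 𝕜 F) : Nonempty (E →ₗᵢ[𝕜] F) := by
  let b := stdOrthonormalBasis 𝕜 E
  let c := stdOrthonormalBasis 𝕜 F
  let f : E →ₗ[𝕜] F := b.toBasis.constr 𝕜 (c ∘ Fin.castLE h)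
  have hf : f ∘ b.toBasis = c ∘ Fin.castLE h := funext (b.toBasis.constr_basis 𝕜 _)
  exact ⟨f.isometryOfOrthonormal (by simp [b.orthonormal])
    (hf ▸ c.orthonormal.comp _ (Fin.castLE_injective h))⟩

namespace Matrix

variable {ι : Type*} [Fintype ι]

theorem rank_gram (v : ι → E) : (gram 𝕜 v).rank = finrank 𝕜 (span 𝕜 (Set.range v)) := by
  set S := span 𝕜 (Set.range v)
  have : FiniteDimensional 𝕜 S := FiniteDimensional.span_of_finite 𝕜 (Set.finite_range v)
  let v' : ι → S := fun i => ⟨v i, subset_span ⟨i, rfl⟩⟩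
  let b := stdOrthonormalBasis 𝕜 S
  let e : S ≃ₗ[𝕜] (Fin (finrank 𝕜 S) → 𝕜) :=
    b.repr.toLinearEquiv.trans (WithLp.linearEquiv 2 𝕜 _)
  have hcols : Set.range (of fun i j => b.repr (v' j) i).col = e '' Set.range v' := by
    rw [← Set.range_comp]; rfl
  have htop : span 𝕜 (Set.range v') = ⊤ := by
    convert span_span_coe_preimage (R := 𝕜) (s := Set.range v)
    ext ⟨x, hx⟩
    simp [v']
  change (gram 𝕜 v').rank = _
  rw [gram_eq_conjTranspose_mul b, rank_conjTranspose_mul_self, rank_eq_finrank_span_cols, hcols,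
    span_image_linearEquiv, htop, LinearEquiv.finrank_map_eq, finrank_top]

theorem PosSemidef.exists_gram_eq {G : Matrix ι ι 𝕜} (hG : G.PosSemidef) :
    ∃ v : ι → EuclideanSpace 𝕜 ι, gram 𝕜 v = G := by
  classical
  open scoped MatrixOrder in
  obtain ⟨B, hB⟩ : ∃ B : Matrix ι ι 𝕜, Bᴴ * B = G := ⟨CFC.sqrt G, by
    rw [← star_eq_conjTranspose, (CFC.sqrt_nonneg G).isSelfAdjoint.star_eq,
      CFC.sqrt_mul_sqrt_self G (nonneg_iff_posSemidef.2 hG)]⟩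
  refine ⟨fun i => WithLp.toLp 2 (fun k => B k i), ?_⟩
  rw [← hB]
  ext i j
  simp [mul_apply, PiLp.inner_apply, mul_comm]

theorem PosSemidef.exists_gram_eq_of_rank_le [FiniteDimensional 𝕜 F] {G : Matrix ι ι 𝕜}
    (hG : G.PosSemidef) (h : G.rank ≤ finrank 𝕜 F) : ∃ w : ι → F, gram 𝕜 w = G := by
  obtain ⟨v, rfl⟩ := hG.exists_gram_eq
  rw [rank_gram] at h
  have : FiniteDimensional 𝕜 (span 𝕜 (Set.range v)) :=
    FiniteDimensional.span_of_finite 𝕜 (Set.finite_range v)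
  obtain ⟨L⟩ := nonempty_linearIsometry_of_finrank_le h
  exact ⟨fun i => L ⟨v i, subset_span ⟨i, rfl⟩⟩, by ext i j; simp [L.inner_map_map]⟩

end Matrix
end

namespace Matrix

open RealInnerProductSpace

variable {ι E : Type*}

def squaredDistMatrix [PseudoMetricSpace E] (x : ι → E) : Matrix ι ι ℝ :=
  of fun i j => dist (x i) (x j) ^ 2

section InnerProductSpace
variable [NormedAddCommGroup E] [InnerProductSpace ℝ E]

lemma squaredDistMatrix_eq_vecMulVec_sub_gram (x : ι → E) :
    squaredDistMatrix x = vecMulVec (fun i => ‖x i‖ ^ 2) (fun _ => 1)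
      + vecMulVec (fun _ => 1) (fun i => ‖x i‖ ^ 2) - (2 : ℝ) • gram ℝ x := by
  ext i j
  simp [squaredDistMatrix, vecMulVec_apply, dist_eq_norm, norm_sub_sq_real]
  ring

lemma gram_sum_smul [Fintype ι] {κ : Type*} (A : Matrix κ ι ℝ) (x : ι → E) :
    gram ℝ (fun i => ∑ k, A i k • x k) = A * gram ℝ x * Aᵀ := by
  ext i j
  simp only [gram_apply, sum_inner, inner_sum, real_inner_smul_left, real_inner_smul_right,
    mul_apply, transpose_apply, Finset.sum_mul]
  exact Finset.sum_congr rfl fun _ _ => Finset.sum_congr rfl fun _ _ => by ring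

end InnerProductSpace

section Centering
variable [Fintype ι] [DecidableEq ι]

variable (ι) in
noncomputable def centering : Matrix ι ι ℝ :=
  1 - (Fintype.card ι : ℝ)⁻¹ • of fun _ _ => 1

lemma centering_fin (n : ℕ) :
    centering (Fin n) = 1 - (n : ℝ)⁻¹ • of fun _ _ : Fin n => (1 : ℝ) := by
  simp [centering]

lemma centering_transpose : (centering ι)ᵀ = centering ι := by
  ext i j
  simp [centering, one_apply, eq_comm]

lemma centering_mulVec (v : ι → ℝ) :
    centering ι *ᵥ v = v - fun _ => (Fintype.card ι : ℝ)⁻¹ * ∑ i, v i := by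
  rw [centering, sub_mulVec, one_mulVec, smul_mulVec]
  ext i
  simp [mulVec, dotProduct]

lemma centering_mulVec_one : centering ι *ᵥ (fun _ => 1) = 0 := by
  ext i
  have : Nonempty ι := ⟨i⟩
  simp [centering_mulVec]

lemma centering_mulVec_of_sum_eq_zero {v : ι → ℝ} (hv : ∑ i, v i = 0) :
    centering ι *ᵥ v = v := by
  rw [centering_mulVec, hv, mul_zero]
  exact sub_zero v

variable [NormedAddCommGroup E] [InnerProductSpace ℝ E]

lemma neg_half_smul_centering_mul_squaredDistMatrix_mul_centering (x : ι → E) :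
    (-(1 / 2) : ℝ) • (centering ι * squaredDistMatrix x * centering ι)
      = gram ℝ (fun i => ∑ k, centering ι i k • x k) := by
  have hleft : (fun _ => 1) ᵥ* centering ι = 0 := by
    rw [← mulVec_transpose, centering_transpose, centering_mulVec_one]
  rw [squaredDistMatrix_eq_vecMulVec_sub_gram, gram_sum_smul, centering_transpose]
  simp only [Matrix.mul_sub, Matrix.sub_mul, Matrix.mul_add, Matrix.add_mul, mul_vecMulVec,
    vecMulVec_mul, centering_mulVec_one, hleft, Matrix.mul_smul, Matrix.smul_mul]
  simp [smul_smul]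

lemma single_sub_single_dotProduct_mulVec {R : Type*} [CommRing R] (M : Matrix ι ι R) (i j : ι) :
    (Pi.single i 1 - Pi.single j 1) ⬝ᵥ M *ᵥ (Pi.single i 1 - Pi.single j 1)
      = M i i - M i j - M j i + M j j := by
  simp [sub_dotProduct, dotProduct_sub, mulVec_sub, mulVec_single]
  ring

lemma dotProduct_centering_mul_mul_centering_mulVec (M : Matrix ι ι ℝ) {v : ι → ℝ}
    (hv : ∑ i, v i = 0) :
    v ⬝ᵥ (centering ι * M * centering ι) *ᵥ v = v ⬝ᵥ M *ᵥ v := by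
  rw [← mulVec_mulVec, ← mulVec_mulVec, centering_mulVec_of_sum_eq_zero hv, dotProduct_mulVec,
    ← mulVec_transpose, centering_transpose, centering_mulVec_of_sum_eq_zero hv]

lemma single_sub_single_dotProduct_gram_mulVec (w : ι → E) (i j : ι) :
    (Pi.single i 1 - Pi.single j 1) ⬝ᵥ gram ℝ w *ᵥ (Pi.single i 1 - Pi.single j 1)
      = ‖w i - w j‖ ^ 2 := by
  rw [single_sub_single_dotProduct_mulVec, ← real_inner_self_eq_norm_sq]
  simp only [gram_apply, inner_sub_left, inner_sub_right, real_inner_comm (w j) (w i)]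
  ring

lemma squaredDistMatrix_eq_of_gram_eq {D : Matrix ι ι ℝ} (hsym : D.IsSymm)
    (hdiag : ∀ i, D i i = 0) {w : ι → E}
    (hw : gram ℝ w = (-(1 / 2) : ℝ) • (centering ι * D * centering ι)) :
    squaredDistMatrix w = D := by
  ext i j
  set v : ι → ℝ := Pi.single i 1 - Pi.single j 1
  have hv : ∑ k, v k = 0 := by simp [v]
  calc dist (w i) (w j) ^ 2 = v ⬝ᵥ gram ℝ w *ᵥ v := by
        rw [single_sub_single_dotProduct_gram_mulVec, dist_eq_norm]
    _ = -(1 / 2) * (v ⬝ᵥ D *ᵥ v) := by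
        rw [hw, smul_mulVec, dotProduct_smul, smul_eq_mul,
          dotProduct_centering_mul_mul_centering_mulVec _ hv]
    _ = D i j := by
        rw [single_sub_single_dotProduct_mulVec, hdiag, hdiag, hsym.apply i j]
        ring

end Centering

end Matrix

open Matrix in
theorem schoenberg_criterion_general (n K : ℕ)
    (D : Matrix (Fin n) (Fin n) ℝ) (hsym : D.IsSymm) (hdiag : ∀ i, D i i = 0) :
    (∃ x : Fin n → EuclideanSpace ℝ (Fin K), ∀ i j, D i j = dist (x i) (x j) ^ 2) ↔
      ((-(1 / 2 : ℝ)) •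
          ((1 - (n : ℝ)⁻¹ • Matrix.of (fun _ _ : Fin n => (1 : ℝ))) * D *
            (1 - (n : ℝ)⁻¹ • Matrix.of (fun _ _ : Fin n => (1 : ℝ))))).PosSemidef ∧
      ((-(1 / 2 : ℝ)) •
          ((1 - (n : ℝ)⁻¹ • Matrix.of (fun _ _ : Fin n => (1 : ℝ))) * D *
            (1 - (n : ℝ)⁻¹ • Matrix.of (fun _ _ : Fin n => (1 : ℝ))))).rank ≤ K := by
  rw [← centering_fin]
  constructor
  · rintro ⟨x, hx⟩
    obtain rfl : D = squaredDistMatrix x := ext hx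
    rw [neg_half_smul_centering_mul_squaredDistMatrix_mul_centering, rank_gram]
    exact ⟨posSemidef_gram ℝ _, (finrank_le _).trans finrank_euclideanSpace_fin.le⟩
  · rintro ⟨hG, hrank⟩
    obtain ⟨w, hw⟩ := hG.exists_gram_eq_of_rank_le (hrank.trans finrank_euclideanSpace_fin.ge)
    exact ⟨w, fun i j => (congrFun₂ (squaredDistMatrix_eq_of_gram_eq hsym hdiag hw) i j).symm⟩

/-- Schoenberg's criterion: a symmetric hollow matrix D is the squared Euclidean
distance matrix of n points in ℝ^K iff G = -(1/2)·J D J is positive semidefinite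
of rank at most K, where J = 1 - (1/n)·𝟙𝟙ᵀ is the centering matrix. -/
theorem schoenberg_criterion (n K : ℕ) (hn : 1 ≤ n)
    (D : Matrix (Fin n) (Fin n) ℝ) (hsym : D.IsSymm) (hdiag : ∀ i, D i i = 0) :
    (∃ x : Fin n → EuclideanSpace ℝ (Fin K), ∀ i j, D i j = dist (x i) (x j) ^ 2) ↔
      ((-(1 / 2 : ℝ)) •
          ((1 - (n : ℝ)⁻¹ • Matrix.of (fun _ _ : Fin n => (1 : ℝ))) * D *
            (1 - (n : ℝ)⁻¹ • Matrix.of (fun _ _ : Fin n => (1 : ℝ))))).PosSemidef ∧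
      ((-(1 / 2 : ℝ)) •
          ((1 - (n : ℝ)⁻¹ • Matrix.of (fun _ _ : Fin n => (1 : ℝ))) * D *
            (1 - (n : ℝ)⁻¹ • Matrix.of (fun _ _ : Fin n => (1 : ℝ))))).rank ≤ K :=
  schoenberg_criterion_general n K D hsym hdiag
end

section
/- Let n ≥ 1 and let x : Fin n → ℝ^K be a family of points with squared Euclidean distance matrix D, i.e. D i j = dist(x i, x j)². Then the rank of D is at most K + 2. -/
/-! Since `‖a - b‖² = ‖a‖² + ‖b‖² - 2⟪a, b⟫`, the squared distance matrix is the sum of two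
matrices of rank at most one and a multiple of the Gram matrix, whose rank is at most the
dimension of the ambient space. -/

open Module

namespace Matrix

variable {m n K : Type*} [Field K]

theorem rank_add_le [Fintype n] (A B : Matrix m n K) : (A + B).rank ≤ A.rank + B.rank := by
  unfold rank
  rw [mulVecLin_add]
  exact (Submodule.finrank_mono (LinearMap.range_add_le _ _)).trans
    (Submodule.finrank_add_le_finrank_add_finrank _ _)

theorem rank_smul_le [Fintype n] (c : K) (A : Matrix m n K) : (c • A).rank ≤ A.rank := by
  classical
  rw [smul_eq_mul_diagonal]
  exact rank_mul_le_left _ _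

theorem rank_gram_le [Fintype n] {𝕜 E : Type*} [RCLike 𝕜] [NormedAddCommGroup E]
    [InnerProductSpace 𝕜 E] [FiniteDimensional 𝕜 E] (v : n → E) :
    (gram 𝕜 v).rank ≤ finrank 𝕜 E := by
  rw [gram_eq_conjTranspose_mul (stdOrthonormalBasis 𝕜 E)]
  exact (rank_mul_le_right _ _).trans ((rank_le_card_height _).trans (by simp))

variable {E : Type*} [NormedAddCommGroup E] [InnerProductSpace ℝ E]

theorem of_dist_sq_eq_add_gram (x : n → E) :
    of (fun i j => dist (x i) (x j) ^ 2) =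
      vecMulVec (fun i => ‖x i‖ ^ 2) 1 + vecMulVec 1 (fun j => ‖x j‖ ^ 2)
        + (-2 : ℝ) • gram ℝ x := by
  ext i j
  simp [dist_eq_norm, norm_sub_sq_real, gram_apply]
  ring

theorem rank_of_dist_sq_le [Fintype n] [FiniteDimensional ℝ E] (x : n → E) :
    (of fun i j => dist (x i) (x j) ^ 2).rank ≤ finrank ℝ E + 2 := by
  rw [of_dist_sq_eq_add_gram]
  calc _ ≤ (vecMulVec (fun i => ‖x i‖ ^ 2) 1).rank + (vecMulVec 1 (fun j => ‖x j‖ ^ 2)).rank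
        + ((-2 : ℝ) • gram ℝ x).rank :=
        (rank_add_le _ _).trans (Nat.add_le_add_right (rank_add_le _ _) _)
    _ ≤ 1 + 1 + finrank ℝ E := by
        gcongr
        · exact rank_vecMulVec_le _ _
        · exact rank_vecMulVec_le _ _
        · exact (rank_smul_le _ _).trans (rank_gram_le x)
    _ = finrank ℝ E + 2 := by ring

end Matrix

theorem edm_rank_le_general (n K : ℕ) (x : Fin n → EuclideanSpace ℝ (Fin K)) :
    (Matrix.of (fun i j : Fin n => dist (x i) (x j) ^ 2)).rank ≤ K + 2 := by
  simpa using Matrix.rank_of_dist_sq_le x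

/-- The squared Euclidean distance matrix of n points in ℝ^K has rank at most K + 2. -/
theorem edm_rank_le (n K : ℕ) (hn : 1 ≤ n) (x : Fin n → EuclideanSpace ℝ (Fin K)) :
    (Matrix.of (fun i j : Fin n => dist (x i) (x j) ^ 2)).rank ≤ K + 2 :=
  edm_rank_le_general n K x
end

section
/- (Example 3.2, rigidity of the full instance.) Work in ℝ². Let x : Fin 5 → ℝ² satisfy: x 0 = (1,0), x 1 = (2,0), x 2 = (2,1), dist(x 0, x 1) = 1, dist(x 0, x 2) = √2, dist(x 0, x 4) = 1, dist(x 1, x 2) = 1, dist(x 1, x 3) = √5, dist(x 2, x 3) = 2, and dist(x 3, x 4) = 1. Then necessarily x 3 = (0,1) and x 4 ∈ {(0,0), (1,1)}. In particular, in any such realization the alternative trilateration position (4,1) for the fourth vertex never occurs. -/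
/-!
Trilaterating `x 3` from the fixed points `x 1 = (2,0)` and `x 2 = (2,1)` leaves the two mirror
positions (0,1) and (4,1). The edges to `x 4` rule out (4,1): a common unit-distance neighbour of
(1,0) and (4,1) would force their distance √10 to be at most 2. With `x 3 = (0,1)`, `x 4` is one
of the two points at unit distance from both (1,0) and (0,1).
-/

namespace EuclideanSpace

lemma dist_sq_fin_two (p q : EuclideanSpace ℝ (Fin 2)) :
    dist p q ^ 2 = (p 0 - q 0) ^ 2 + (p 1 - q 1) ^ 2 := by
  rw [EuclideanSpace.dist_eq, Real.sq_sqrt (by positivity)]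
  simp [Fin.sum_univ_two, Real.dist_eq, sq_abs]

lemma dist_vec2_sq (a b : ℝ) (q : EuclideanSpace ℝ (Fin 2)) :
    dist !₂[a, b] q ^ 2 = (a - q 0) ^ 2 + (b - q 1) ^ 2 := by
  simp [dist_sq_fin_two]

lemma eq_vec2_iff (p : EuclideanSpace ℝ (Fin 2)) (a b : ℝ) :
    p = !₂[a, b] ↔ p 0 = a ∧ p 1 = b := by
  constructor
  · rintro rfl
    simp
  · rintro ⟨ha, hb⟩
    ext i
    fin_cases i <;> simp [ha, hb]

end EuclideanSpace

open EuclideanSpace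

lemma eq_or_eq_of_dist_two_zero_of_dist_two_one (p : EuclideanSpace ℝ (Fin 2))
    (h₀ : dist !₂[2, 0] p = √5) (h₁ : dist !₂[2, 1] p = 2) :
    p = !₂[0, 1] ∨ p = !₂[4, 1] := by
  have e₀ := dist_vec2_sq 2 0 p
  have e₁ := dist_vec2_sq 2 1 p
  rw [h₀, Real.sq_sqrt (by norm_num)] at e₀
  rw [h₁] at e₁
  have hy : p 1 = 1 := by linarith
  have hx : p 0 * (p 0 - 4) = 0 := by rw [hy] at e₁; linarith
  simp only [eq_vec2_iff, hy, and_true]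
  rcases mul_eq_zero.1 hx with h | h
  · exact .inl h
  · exact .inr (by linarith)

lemma eq_or_eq_of_dist_one_zero_of_dist_zero_one (q : EuclideanSpace ℝ (Fin 2))
    (h₀ : dist !₂[1, 0] q = 1) (h₁ : dist !₂[0, 1] q = 1) :
    q = !₂[0, 0] ∨ q = !₂[1, 1] := by
  have e₀ := dist_vec2_sq 1 0 q
  have e₁ := dist_vec2_sq 0 1 q
  rw [h₀] at e₀
  rw [h₁] at e₁
  have hxy : q 1 = q 0 := by linarith
  have hx : q 0 * (q 0 - 1) = 0 := by rw [hxy] at e₀; linarith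
  simp only [eq_vec2_iff, hxy, and_self]
  rcases mul_eq_zero.1 hx with h | h
  · exact .inl h
  · exact .inr (by linarith)

theorem full_instance_rigid_general (x : Fin 5 → EuclideanSpace ℝ (Fin 2))
    (h0 : x 0 = !₂[1, 0]) (h1 : x 1 = !₂[2, 0]) (h2 : x 2 = !₂[2, 1])
    (h04 : dist (x 0) (x 4) = 1)
    (h13 : dist (x 1) (x 3) = Real.sqrt 5)
    (h23 : dist (x 2) (x 3) = 2)
    (h34 : dist (x 3) (x 4) = 1) :
    x 3 = !₂[0, 1] ∧ (x 4 = !₂[0, 0] ∨ x 4 = !₂[1, 1]) := by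
  rw [h0] at h04
  rw [h1] at h13
  rw [h2] at h23
  obtain h3 | h3 := eq_or_eq_of_dist_two_zero_of_dist_two_one (x 3) h13 h23
  · rw [h3] at h34
    exact ⟨h3, eq_or_eq_of_dist_one_zero_of_dist_zero_one (x 4) h04 h34⟩
  · exfalso
    have hfar : dist (!₂[(1 : ℝ), 0]) !₂[4, 1] ^ 2 = 10 := by
      rw [dist_vec2_sq]
      norm_num
    have hnear : dist (!₂[(1 : ℝ), 0]) !₂[4, 1] ≤ 2 := by
      rw [← h3]
      linarith [dist_triangle (!₂[(1 : ℝ), 0]) (x 4) (x 3), dist_comm (x 4) (x 3)]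
    nlinarith [dist_nonneg (x := (!₂[(1 : ℝ), 0])) (y := !₂[4, 1])]

/-- Example 3.2, rigidity of the full instance: any realization of the whole
graph with the first three vertices fixed at (1,0), (2,0), (2,1) must place
vertex 4 (index 3) at (0,1) and vertex 5 (index 4) at (0,0) or (1,1); the
alternative trilateration position (4,1) never occurs. -/
theorem full_instance_rigid (x : Fin 5 → EuclideanSpace ℝ (Fin 2))
    (h0 : x 0 = !₂[1, 0]) (h1 : x 1 = !₂[2, 0]) (h2 : x 2 = !₂[2, 1])
    (h01 : dist (x 0) (x 1) = 1)
    (h02 : dist (x 0) (x 2) = Real.sqrt 2)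
    (h04 : dist (x 0) (x 4) = 1)
    (h12 : dist (x 1) (x 2) = 1)
    (h13 : dist (x 1) (x 3) = Real.sqrt 5)
    (h23 : dist (x 2) (x 3) = 2)
    (h34 : dist (x 3) (x 4) = 1) :
    x 3 = !₂[0, 1] ∧ (x 4 = !₂[0, 0] ∨ x 4 = !₂[1, 1]) :=
  full_instance_rigid_general x h0 h1 h2 h04 h13 h23 h34
end
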